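/- arXiv:1705.11080 — 3 statements merged into one kernel-verified Lean document; each statement's English description precedes it below -/
import Mathlib

section
/- For any matrix X, (X*X)⁺ = X⁺(X*)⁺ and (XX*)⁺ = (X*)⁺X⁺. -/
open Matrix

/-- The four Penrose conditions: `G` is the Moore-Penrose pseudoinverse of `X`. -/
def IsMoorePenrose {m n : ℕ} (X : Matrix (Fin m) (Fin n) ℂ)
    (G : Matrix (Fin n) (Fin m) ℂ) : Prop :=
  X * G * X = X ∧ G * X * G = G ∧ (X * G)ᴴ = X * G ∧ (G * X)ᴴ = G * X

lemma mp_unique {m n : ℕ} {X : Matrix (Fin m) (Fin n) ℂ}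
    {G1 G2 : Matrix (Fin n) (Fin m) ℂ}
    (h1 : IsMoorePenrose X G1) (h2 : IsMoorePenrose X G2) : G1 = G2 := by
  obtain ⟨a1, b1, c1, d1⟩ := h1
  obtain ⟨a2, b2, c2, d2⟩ := h2
  have hXG : X * G1 = X * G2 := by
    calc X * G1 = (X * G2 * X) * G1 := by rw [a2]
    _ = (X * G2) * (X * G1) := by rw [Matrix.mul_assoc (X * G2)]
    _ = (X * G2)ᴴ * (X * G1)ᴴ := by rw [c2, c1]
    _ = ((X * G1) * (X * G2))ᴴ := (conjTranspose_mul _ _).symm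
    _ = ((X * G1 * X) * G2)ᴴ := by rw [Matrix.mul_assoc (X * G1)]
    _ = (X * G2)ᴴ := by rw [a1]
    _ = X * G2 := c2
  have hGX : G1 * X = G2 * X := by
    calc G1 * X = G1 * (X * G2 * X) := by rw [a2]
    _ = (G1 * X) * (G2 * X) := by simp only [Matrix.mul_assoc]
    _ = (G1 * X)ᴴ * (G2 * X)ᴴ := by rw [d1, d2]
    _ = ((G2 * X) * (G1 * X))ᴴ := (conjTranspose_mul _ _).symm
    _ = (G2 * (X * G1 * X))ᴴ := by simp only [Matrix.mul_assoc]
    _ = (G2 * X)ᴴ := by rw [a1]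
    _ = G2 * X := d2
  calc G1 = G1 * X * G1 := b1.symm
  _ = G1 * (X * G2) := by rw [Matrix.mul_assoc, hXG]
  _ = (G1 * X) * G2 := by rw [Matrix.mul_assoc]
  _ = G2 * X * G2 := by rw [hGX]
  _ = G2 := b2

lemma mp_conj {m n : ℕ} {X : Matrix (Fin m) (Fin n) ℂ}
    {G : Matrix (Fin n) (Fin m) ℂ} (h : IsMoorePenrose X G) :
    IsMoorePenrose Xᴴ Gᴴ := by
  obtain ⟨a, b, c, d⟩ := h
  refine ⟨?_, ?_, ?_, ?_⟩
  · calc Xᴴ * Gᴴ * Xᴴ = (X * (G * X))ᴴ := by simp [conjTranspose_mul, Matrix.mul_assoc]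
    _ = Xᴴ := by rw [← Matrix.mul_assoc, a]
  · calc Gᴴ * Xᴴ * Gᴴ = (G * (X * G))ᴴ := by simp [conjTranspose_mul, Matrix.mul_assoc]
    _ = Gᴴ := by rw [← Matrix.mul_assoc, b]
  · have h1 : Xᴴ * Gᴴ = (G * X)ᴴ := (conjTranspose_mul G X).symm
    rw [h1, conjTranspose_conjTranspose, d]
  · have h1 : Gᴴ * Xᴴ = (X * G)ᴴ := (conjTranspose_mul X G).symm
    rw [h1, conjTranspose_conjTranspose, c]

lemma mp_gram {m n : ℕ} {X : Matrix (Fin m) (Fin n) ℂ}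
    {G : Matrix (Fin n) (Fin m) ℂ} (h : IsMoorePenrose X G) :
    IsMoorePenrose (Xᴴ * X) (G * Gᴴ) := by
  obtain ⟨a, b, c, d⟩ := h
  have hGX : Gᴴ * Xᴴ = X * G := by rw [← conjTranspose_mul, c]
  have a' : X * (G * X) = X := by rw [← Matrix.mul_assoc, a]
  have b' : G * (X * G) = G := by rw [← Matrix.mul_assoc, b]
  have h1 : Gᴴ * (Xᴴ * X) = X * (G * X) := by
    rw [← Matrix.mul_assoc, hGX, Matrix.mul_assoc]
  have key1 : G * Gᴴ * (Xᴴ * X) = G * X := by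
    simp only [Matrix.mul_assoc]
    rw [h1, a']
  have key2 : (Xᴴ * X) * (G * Gᴴ) = G * X := by
    have e : (Xᴴ * X) * (G * Gᴴ) = ((G * Gᴴ) * (Xᴴ * X))ᴴ := by
      simp [conjTranspose_mul, Matrix.mul_assoc]
    rw [e, key1, d]
  refine ⟨?_, ?_, ?_, ?_⟩
  · rw [Matrix.mul_assoc (Xᴴ * X), key1, Matrix.mul_assoc, a']
  · rw [key1, Matrix.mul_assoc, ← Matrix.mul_assoc X G, ← Matrix.mul_assoc G, b']
  · rw [key2, d]
  · rw [key1, d]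

/-- (XᴴX)⁺ = X⁺(Xᴴ)⁺ and (XXᴴ)⁺ = (Xᴴ)⁺X⁺. -/
theorem pinv_gram (m n : ℕ) (X : Matrix (Fin m) (Fin n) ℂ)
    (G : Matrix (Fin n) (Fin m) ℂ) (hG : IsMoorePenrose X G)
    (H : Matrix (Fin m) (Fin n) ℂ) (hH : IsMoorePenrose Xᴴ H)
    (P : Matrix (Fin n) (Fin n) ℂ) (hP : IsMoorePenrose (Xᴴ * X) P)
    (Q : Matrix (Fin m) (Fin m) ℂ) (hQ : IsMoorePenrose (X * Xᴴ) Q) :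
    P = G * H ∧ Q = H * G := by
  have hHG : H = Gᴴ := mp_unique hH (mp_conj hG)
  subst hHG
  have h1 : P = G * Gᴴ := mp_unique hP (mp_gram hG)
  have h2 : Q = Gᴴ * G := by
    have := mp_gram (mp_conj hG)
    simp only [conjTranspose_conjTranspose] at this
    exact mp_unique hQ this
  exact ⟨h1, h2⟩
end

section
/- The reverse-order law for pseudoinverses holds when the inner factors have matching full rank: if X is m×n with full column rank and Y is n×p with full row rank, then (XY)⁺ = Y⁺X⁺. -/
open Matrix

/-- Full column rank implies `mulVec` is injective. -/
lemma mulVec_injective_of_rank {m n : ℕ} (X : Matrix (Fin m) (Fin n) ℂ)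
    (hX : X.rank = n) : Function.Injective X.mulVec := by
  have h : LinearMap.ker X.mulVecLin = ⊥ := by
    have hrn := X.mulVecLin.finrank_range_add_finrank_ker
    rw [Matrix.rank] at hX
    rw [hX] at hrn
    simp only [Module.finrank_fintype_fun_eq_card, Fintype.card_fin] at hrn
    have : Module.finrank ℂ (LinearMap.ker X.mulVecLin) = 0 := by omega
    exact Submodule.finrank_eq_zero.mp this
  intro a b hab
  have := LinearMap.ker_eq_bot.mp h
  exact this hab

lemma mul_left_cancel_of_rank {m n k : ℕ} (X : Matrix (Fin m) (Fin n) ℂ)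
    (hX : X.rank = n) (A B : Matrix (Fin n) (Fin k) ℂ) (h : X * A = X * B) :
    A = B := by
  have hi := mulVec_injective_of_rank X hX
  ext i j
  have : X.mulVec (fun r => A r j) = X.mulVec (fun r => B r j) := by
    ext s
    have := congrFun (congrFun h s) j
    simpa [Matrix.mul_apply, Matrix.mulVec, dotProduct] using this
  exact congrFun (hi this) i

lemma mul_right_cancel_of_rank {n p k : ℕ} (Y : Matrix (Fin n) (Fin p) ℂ)
    (hY : Y.rank = n) (A B : Matrix (Fin k) (Fin n) ℂ) (h : A * Y = B * Y) :
    A = B := by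
  have hT : Yᵀ.rank = p → True := fun _ => trivial
  have hrank : Yᵀ.rank = n := by rw [Matrix.rank_transpose]; exact hY
  have := mul_left_cancel_of_rank Yᵀ hrank Aᵀ Bᵀ (by
    rw [← Matrix.transpose_mul, ← Matrix.transpose_mul, h])
  calc A = Aᵀᵀ := (Matrix.transpose_transpose A).symm
    _ = Bᵀᵀ := by rw [this]
    _ = B := Matrix.transpose_transpose B

/-- Uniqueness of the Moore-Penrose inverse. -/
lemma isMoorePenrose_unique {m n : ℕ} (X : Matrix (Fin m) (Fin n) ℂ)
    (G₁ G₂ : Matrix (Fin n) (Fin m) ℂ)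
    (h₁ : IsMoorePenrose X G₁) (h₂ : IsMoorePenrose X G₂) : G₁ = G₂ := by
  obtain ⟨a1, b1, c1, d1⟩ := h₁
  obtain ⟨a2, b2, c2, d2⟩ := h₂
  have h1 : X * G₁ = X * G₂ := by
    calc X * G₁ = (X * G₁)ᴴ := c1.symm
      _ = G₁ᴴ * Xᴴ := by rw [conjTranspose_mul]
      _ = G₁ᴴ * (X * G₂ * X)ᴴ := by rw [a2]
      _ = G₁ᴴ * (Xᴴ * (X * G₂)ᴴ) := by rw [conjTranspose_mul]
      _ = G₁ᴴ * Xᴴ * (X * G₂) := by rw [c2, Matrix.mul_assoc]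
      _ = (X * G₁)ᴴ * (X * G₂) := by rw [conjTranspose_mul]
      _ = X * G₁ * (X * G₂) := by rw [c1]
      _ = X * G₁ * X * G₂ := by simp only [Matrix.mul_assoc]
      _ = X * G₂ := by rw [a1]
  have h2 : G₁ * X = G₂ * X := by
    calc G₁ * X = (G₁ * X)ᴴ := d1.symm
      _ = Xᴴ * G₁ᴴ := by rw [conjTranspose_mul]
      _ = (X * (G₂ * X))ᴴ * G₁ᴴ := by rw [← Matrix.mul_assoc, a2]
      _ = (G₂ * X)ᴴ * Xᴴ * G₁ᴴ := by rw [conjTranspose_mul]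
      _ = G₂ * X * (Xᴴ * G₁ᴴ) := by rw [d2, Matrix.mul_assoc]
      _ = G₂ * X * (G₁ * X)ᴴ := by rw [conjTranspose_mul]
      _ = G₂ * X * (G₁ * X) := by rw [d1]
      _ = G₂ * (X * G₁ * X) := by simp only [Matrix.mul_assoc]
      _ = G₂ * X := by rw [a1]
  calc G₁ = G₁ * X * G₁ := b1.symm
    _ = G₂ * X * G₁ := by rw [h2]
    _ = G₂ * (X * G₁) := by rw [Matrix.mul_assoc]
    _ = G₂ * (X * G₂) := by rw [h1]
    _ = G₂ * X * G₂ := by rw [Matrix.mul_assoc]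
    _ = G₂ := b2

/-- Reverse-order law when X has full column rank and Y has full row rank. -/
theorem pinv_mul_reverse_order (m n p : ℕ) (X : Matrix (Fin m) (Fin n) ℂ)
    (Y : Matrix (Fin n) (Fin p) ℂ) (hX : X.rank = n) (hY : Y.rank = n)
    (Xp : Matrix (Fin n) (Fin m) ℂ) (hXp : IsMoorePenrose X Xp)
    (Yp : Matrix (Fin p) (Fin n) ℂ) (hYp : IsMoorePenrose Y Yp)
    (Z : Matrix (Fin p) (Fin m) ℂ) (hZ : IsMoorePenrose (X * Y) Z) :
    Z = Yp * Xp := by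
  obtain ⟨aX, bX, cX, dX⟩ := hXp
  obtain ⟨aY, bY, cY, dY⟩ := hYp
  -- Xp * X = 1
  have hXpX : Xp * X = 1 := by
    apply mul_left_cancel_of_rank X hX
    rw [← Matrix.mul_assoc, aX, Matrix.mul_one]
  -- Y * Yp = 1
  have hYYp : Y * Yp = 1 := by
    apply mul_right_cancel_of_rank Y hY
    rw [Matrix.mul_assoc, ← Matrix.mul_assoc Y Yp Y]
    rw [aY, Matrix.one_mul]
  have hMP : IsMoorePenrose (X * Y) (Yp * Xp) := by
    refine ⟨?_, ?_, ?_, ?_⟩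
    · calc X * Y * (Yp * Xp) * (X * Y)
          = X * (Y * Yp) * (Xp * X) * Y := by
            simp only [Matrix.mul_assoc]
        _ = X * Y := by rw [hXpX, hYYp, Matrix.mul_one, Matrix.mul_assoc, Matrix.one_mul]
    · calc Yp * Xp * (X * Y) * (Yp * Xp)
          = Yp * (Xp * X) * (Y * Yp) * Xp := by
            simp only [Matrix.mul_assoc]
        _ = Yp * Xp := by rw [hXpX, hYYp, Matrix.mul_one, Matrix.mul_assoc, Matrix.one_mul]
    · have : X * Y * (Yp * Xp) = X * Xp := by
        rw [Matrix.mul_assoc, ← Matrix.mul_assoc Y Yp Xp, hYYp, Matrix.one_mul]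
      rw [this, cX]
    · have : Yp * Xp * (X * Y) = Yp * Y := by
        rw [Matrix.mul_assoc, ← Matrix.mul_assoc Xp X Y, hXpX, Matrix.one_mul]
      rw [this, dY]
  exact isMoorePenrose_unique (X * Y) Z (Yp * Xp) hZ hMP
end

section
/- Galperin–Waksman representation: for any matrices X (m×n) and Y (n×p), setting h = (X⁺X Y Y⁺)⁺, there exists a matrix g with Y Y⁺ g X⁺ X = g and (XY)⁺ = Y⁺ (h + g) X⁺. -/
open Matrix

/-- Uniqueness of the Moore-Penrose pseudoinverse. -/
lemma mp_unique_s17 {a b : ℕ} {K : Matrix (Fin a) (Fin b) ℂ}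
    {Z Z' : Matrix (Fin b) (Fin a) ℂ}
    (hZ : IsMoorePenrose K Z) (hZ' : IsMoorePenrose K Z') : Z = Z' := by
  obtain ⟨k1, k2, k3, k4⟩ := hZ
  obtain ⟨l1, l2, l3, l4⟩ := hZ'
  have e1 : K * Z = K * Z' := by
    calc K * Z = (K * Z' * K) * Z := by rw [l1]
    _ = (K * Z') * (K * Z) := by simp only [Matrix.mul_assoc]
    _ = (K * Z')ᴴ * (K * Z)ᴴ := by rw [l3, k3]
    _ = Z'ᴴ * ((K * Z * K)ᴴ) := by
        rw [conjTranspose_mul K Z', conjTranspose_mul (K * Z) K, conjTranspose_mul K Z]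
        simp only [Matrix.mul_assoc]
    _ = Z'ᴴ * Kᴴ := by rw [k1]
    _ = (K * Z')ᴴ := (conjTranspose_mul K Z').symm
    _ = K * Z' := l3
  have e2 : Z * K = Z' * K := by
    calc Z * K = Z * (K * Z' * K) := by rw [l1]
    _ = (Z * K) * (Z' * K) := by simp only [Matrix.mul_assoc]
    _ = (Z * K)ᴴ * (Z' * K)ᴴ := by rw [k4, l4]
    _ = (K * Z * K)ᴴ * Z'ᴴ := by
        rw [conjTranspose_mul Z K, conjTranspose_mul Z' K, conjTranspose_mul (K * Z) K,
          conjTranspose_mul K Z]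
        simp only [Matrix.mul_assoc]
    _ = Kᴴ * Z'ᴴ := by rw [k1]
    _ = (Z' * K)ᴴ := (conjTranspose_mul Z' K).symm
    _ = Z' * K := l4
  calc Z = Z * K * Z := k2.symm
  _ = Z' * K * Z := by rw [e2]
  _ = Z' * (K * Z') := by rw [Matrix.mul_assoc, e1]
  _ = Z' := by rw [← Matrix.mul_assoc, l2]

/-- Galperin–Waksman representation: with h = (X⁺X Y Y⁺)⁺ there is a matrix g
with YY⁺ g X⁺X = g and (XY)⁺ = Y⁺ (h + g) X⁺. -/
theorem galperin_waksman (m n p : ℕ) (X : Matrix (Fin m) (Fin n) ℂ)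
    (Y : Matrix (Fin n) (Fin p) ℂ)
    (Xp : Matrix (Fin n) (Fin m) ℂ) (hXp : IsMoorePenrose X Xp)
    (Yp : Matrix (Fin p) (Fin n) ℂ) (hYp : IsMoorePenrose Y Yp)
    (h : Matrix (Fin n) (Fin n) ℂ) (hh : IsMoorePenrose (Xp * X * (Y * Yp)) h) :
    ∃ g : Matrix (Fin n) (Fin n) ℂ,
      Y * Yp * g * (Xp * X) = g ∧
      ∀ Z : Matrix (Fin p) (Fin m) ℂ, IsMoorePenrose (X * Y) Z →
        Z = Yp * (h + g) * Xp := by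
  obtain ⟨x1, x2, x3, x4⟩ := hXp
  obtain ⟨y1, y2, y3, y4⟩ := hYp
  by_cases hex : ∃ Z₀ : Matrix (Fin p) (Fin m) ℂ, IsMoorePenrose (X * Y) Z₀
  · obtain ⟨Z₀, hZ₀⟩ := hex
    obtain ⟨z1, z2, z3, z4⟩ := id hZ₀
    -- basic absorption facts
    have hXXp : Xᴴ * (X * Xp) = Xᴴ := by
      calc Xᴴ * (X * Xp) = Xᴴ * (X * Xp)ᴴ := by rw [x3]
      _ = (X * Xp * X)ᴴ := by rw [conjTranspose_mul (X * Xp) X]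
      _ = Xᴴ := by rw [x1]
    have hYYh : (Yp * Y) * Yᴴ = Yᴴ := by
      calc (Yp * Y) * Yᴴ = (Yp * Y)ᴴ * Yᴴ := by rw [y4]
      _ = (Y * (Yp * Y))ᴴ := by rw [conjTranspose_mul Y (Yp * Y)]
      _ = Yᴴ := by rw [← Matrix.mul_assoc, y1]
    have factC : Z₀ * (X * Xp) = Z₀ := by
      have hrep : Z₀ = Z₀ * (Z₀ᴴ * (Yᴴ * Xᴴ)) := by
        calc Z₀ = Z₀ * (X * Y) * Z₀ := z2.symm
        _ = Z₀ * ((X * Y) * Z₀) := by rw [Matrix.mul_assoc]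
        _ = Z₀ * ((X * Y) * Z₀)ᴴ := by rw [z3]
        _ = Z₀ * (Z₀ᴴ * (Yᴴ * Xᴴ)) := by
            rw [conjTranspose_mul (X * Y) Z₀, conjTranspose_mul X Y]
      calc Z₀ * (X * Xp) = Z₀ * (Z₀ᴴ * (Yᴴ * Xᴴ)) * (X * Xp) := by rw [← hrep]
      _ = Z₀ * (Z₀ᴴ * (Yᴴ * (Xᴴ * (X * Xp)))) := by simp only [Matrix.mul_assoc]
      _ = Z₀ * (Z₀ᴴ * (Yᴴ * Xᴴ)) := by rw [hXXp]
      _ = Z₀ := hrep.symm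
    have factD : Yp * (Y * Z₀) = Z₀ := by
      have hrep : Z₀ = (Yᴴ * Xᴴ) * (Z₀ᴴ * Z₀) := by
        calc Z₀ = Z₀ * (X * Y) * Z₀ := z2.symm
        _ = (Z₀ * (X * Y))ᴴ * Z₀ := by rw [z4]
        _ = (Yᴴ * Xᴴ) * (Z₀ᴴ * Z₀) := by
            rw [conjTranspose_mul Z₀ (X * Y), conjTranspose_mul X Y]
            simp only [Matrix.mul_assoc]
      calc Yp * (Y * Z₀) = Yp * (Y * ((Yᴴ * Xᴴ) * (Z₀ᴴ * Z₀))) := by rw [← hrep]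
      _ = ((Yp * Y) * Yᴴ) * (Xᴴ * (Z₀ᴴ * Z₀)) := by simp only [Matrix.mul_assoc]
      _ = Yᴴ * (Xᴴ * (Z₀ᴴ * Z₀)) := by rw [hYYh]
      _ = (Yᴴ * Xᴴ) * (Z₀ᴴ * Z₀) := by simp only [Matrix.mul_assoc]
      _ = Z₀ := hrep.symm
    have hQ2 : Y * Yp * (Y * Yp) = Y * Yp := by
      calc Y * Yp * (Y * Yp) = (Y * Yp * Y) * Yp := by simp only [Matrix.mul_assoc]
      _ = Y * Yp := by rw [y1]
    have hP2 : Xp * X * (Xp * X) = Xp * X := by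
      calc Xp * X * (Xp * X) = Xp * ((X * Xp) * X) := by simp only [Matrix.mul_assoc]
      _ = Xp * X := by rw [x1]
    have hYpQ : Yp * (Y * Yp) = Yp := by rw [← Matrix.mul_assoc]; exact y2
    refine ⟨Y * Yp * (Y * Z₀ * X - h) * (Xp * X), ?_, ?_⟩
    · calc Y * Yp * (Y * Yp * (Y * Z₀ * X - h) * (Xp * X)) * (Xp * X)
          = (Y * Yp * (Y * Yp)) * ((Y * Z₀ * X - h) * (Xp * X * (Xp * X))) := by
            simp only [Matrix.mul_assoc]
      _ = (Y * Yp) * ((Y * Z₀ * X - h) * (Xp * X)) := by rw [hQ2, hP2]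
      _ = Y * Yp * (Y * Z₀ * X - h) * (Xp * X) := by simp only [Matrix.mul_assoc]
    · intro Z hZ
      have hZZ : Z = Z₀ := mp_unique_s17 hZ hZ₀
      rw [hZZ]
      refine Eq.symm ?_
      calc Yp * (h + Y * Yp * (Y * Z₀ * X - h) * (Xp * X)) * Xp
          = Yp * h * Xp + Yp * (Y * Yp * (Y * Z₀ * X - h) * (Xp * X)) * Xp := by
            rw [Matrix.mul_add, Matrix.add_mul]
      _ = Yp * h * Xp + (Yp * (Y * Yp)) * ((Y * Z₀ * X - h) * ((Xp * X) * Xp)) := by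
            simp only [Matrix.mul_assoc]
      _ = Yp * h * Xp + Yp * ((Y * Z₀ * X - h) * Xp) := by rw [hYpQ, x2]
      _ = Yp * h * Xp + (Yp * ((Y * Z₀ * X) * Xp) - Yp * (h * Xp)) := by
            rw [Matrix.sub_mul, Matrix.mul_sub]
      _ = Yp * ((Y * Z₀ * X) * Xp) := by rw [Matrix.mul_assoc Yp h Xp]; abel
      _ = Yp * (Y * (Z₀ * (X * Xp))) := by simp only [Matrix.mul_assoc]
      _ = Yp * (Y * Z₀) := by rw [factC]
      _ = Z₀ := factD
  · exact ⟨0, by simp, fun Z hZ => absurd ⟨Z, hZ⟩ hex⟩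
end
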